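/- arXiv:2501.18646 — 2 statements merged into one kernel-verified Lean document; each statement's English description precedes it below -/
import Mathlib

section
/- (Ghost weight energy identity) Let q = q(|x|−t) be a smooth function of one variable, and let v be a smooth function on ℝ × ℝ², with |x| > 0. Then ½ ∂_t[e^q(|∂_t v|² + |∇v|²)] − div(e^q ∂_t v ∇v) + (e^q q'(|x|−t)/2)(|∂̄_1 v|² + |∂̄_2 v|²) = e^q (□v) ∂_t v, where ∂̄_i = ∂_i + (x_i/|x|)∂_t and □ = ∂_t² − Δ. -/
noncomputable section

abbrev Pt := ℝ × ℝ × ℝ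

def dt (f : Pt → ℝ) : Pt → ℝ := fun p => fderiv ℝ f p (1, 0, 0)
def d1 (f : Pt → ℝ) : Pt → ℝ := fun p => fderiv ℝ f p (0, 1, 0)
def d2 (f : Pt → ℝ) : Pt → ℝ := fun p => fderiv ℝ f p (0, 0, 1)
def rad (p : Pt) : ℝ := Real.sqrt (p.2.1 ^ 2 + p.2.2 ^ 2)
def bar1 (f : Pt → ℝ) : Pt → ℝ := fun p => d1 f p + (p.2.1 / rad p) * dt f p
def bar2 (f : Pt → ℝ) : Pt → ℝ := fun p => d2 f p + (p.2.2 / rad p) * dt f p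
def Box (f : Pt → ℝ) : Pt → ℝ :=
  fun p => dt (dt f) p - d1 (d1 f) p - d2 (d2 f) p

def pit : Pt →L[ℝ] ℝ := ContinuousLinearMap.fst ℝ ℝ (ℝ × ℝ)
def pi1 : Pt →L[ℝ] ℝ :=
  (ContinuousLinearMap.fst ℝ ℝ ℝ).comp (ContinuousLinearMap.snd ℝ ℝ (ℝ × ℝ))
def pi2 : Pt →L[ℝ] ℝ :=
  (ContinuousLinearMap.snd ℝ ℝ ℝ).comp (ContinuousLinearMap.snd ℝ ℝ (ℝ × ℝ))

@[simp] lemma pit_apply (w : Pt) : pit w = w.1 := rfl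
@[simp] lemma pi1_apply (w : Pt) : pi1 w = w.2.1 := rfl
@[simp] lemma pi2_apply (w : Pt) : pi2 w = w.2.2 := rfl

lemma dt_def (f : Pt → ℝ) : dt f = fun p => fderiv ℝ f p (1, 0, 0) := rfl
lemma d1_def (f : Pt → ℝ) : d1 f = fun p => fderiv ℝ f p (0, 1, 0) := rfl
lemma d2_def (f : Pt → ℝ) : d2 f = fun p => fderiv ℝ f p (0, 0, 1) := rfl

lemma hasFDerivAt_rad (p : Pt) (hp : 0 < rad p) :
    HasFDerivAt rad
      ((1 / (2 * rad p)) • (((2 : ℕ) * p.2.1 ^ 1) • pi1 + ((2 : ℕ) * p.2.2 ^ 1) • pi2)) p := by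
  have h0 : p.2.1 ^ 2 + p.2.2 ^ 2 ≠ 0 := by
    have := Real.sqrt_pos.mp hp; linarith
  have h1c : HasFDerivAt (fun s : Pt => s.2.1) pi1 p := pi1.hasFDerivAt
  have h2c : HasFDerivAt (fun s : Pt => s.2.2) pi2 p := pi2.hasFDerivAt
  have hs : HasFDerivAt (fun s : Pt => s.2.1 ^ 2 + s.2.2 ^ 2)
      (((2 : ℕ) * p.2.1 ^ 1) • pi1 + ((2 : ℕ) * p.2.2 ^ 1) • pi2) p :=
    by have h := ((hasDerivAt_pow 2 p.2.1).comp_hasFDerivAt p h1c).add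
        ((hasDerivAt_pow 2 p.2.2).comp_hasFDerivAt p h2c); exact h
  exact hs.sqrt h0

lemma hasFDerivAt_E (q : ℝ → ℝ) (hq : ContDiff ℝ (⊤ : ℕ∞) q) (p : Pt) (hp : 0 < rad p) :
    HasFDerivAt (fun s : Pt => Real.exp (q (rad s - s.1)))
      (Real.exp (q (rad p - p.1)) • deriv q (rad p - p.1) •
        ((1 / (2 * rad p)) • (((2 : ℕ) * p.2.1 ^ 1) • pi1 + ((2 : ℕ) * p.2.2 ^ 1) • pi2) - pit))
      p := by
  have hphi : HasFDerivAt (fun s : Pt => rad s - s.1)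
      ((1 / (2 * rad p)) • (((2 : ℕ) * p.2.1 ^ 1) • pi1 + ((2 : ℕ) * p.2.2 ^ 1) • pi2) - pit) p :=
    (hasFDerivAt_rad p hp).sub pit.hasFDerivAt
  have hq' : HasDerivAt q (deriv q (rad p - p.1)) (rad p - p.1) :=
    ((hq.differentiable (by simp)) (rad p - p.1)).hasDerivAt
  exact (Real.hasDerivAt_exp (q (rad p - p.1))).comp_hasFDerivAt p (hq'.comp_hasFDerivAt p hphi)

/-- Alinhac's ghost weight energy identity, pointwise for `x ≠ 0`. -/
theorem stmt8 (q : ℝ → ℝ) (hq : ContDiff ℝ (⊤ : ℕ∞) q)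
    (v : Pt → ℝ) (hv : ContDiff ℝ (⊤ : ℕ∞) v) (p : Pt) (hp : 0 < rad p) :
    (1 / 2) * dt (fun s => Real.exp (q (rad s - s.1)) *
        (dt v s ^ 2 + d1 v s ^ 2 + d2 v s ^ 2)) p -
      (d1 (fun s => Real.exp (q (rad s - s.1)) * dt v s * d1 v s) p +
        d2 (fun s => Real.exp (q (rad s - s.1)) * dt v s * d2 v s) p) +
      (Real.exp (q (rad p - p.1)) * deriv q (rad p - p.1) / 2) *
        (bar1 v p ^ 2 + bar2 v p ^ 2) =
    Real.exp (q (rad p - p.1)) * Box v p * dt v p := by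
  have hr : rad p ≠ 0 := ne_of_gt hp
  have hr2 : rad p ^ 2 = p.2.1 ^ 2 + p.2.2 ^ 2 := Real.sq_sqrt (by positivity)
  have hE := hasFDerivAt_E q hq p hp
  have hv1 : ContDiff ℝ 1 (fderiv ℝ v) := (hv.of_le (WithTop.coe_le_coe.mpr le_top) (m := 2)).fderiv_right (le_refl 2)
  have hwd : ∀ e : Pt, DifferentiableAt ℝ (fun s => fderiv ℝ v s e) p := fun e =>
    ((hv1.clm_apply contDiff_const).differentiable one_ne_zero) p
  have hw : ∀ e : Pt, HasFDerivAt (fun s => fderiv ℝ v s e)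
      (fderiv ℝ (fun s => fderiv ℝ v s e) p) p := fun e => (hwd e).hasFDerivAt
  have key : ∀ e u : Pt, fderiv ℝ (fun s => fderiv ℝ v s e) p u = fderiv ℝ (fderiv ℝ v) p u e := by
    intro e u
    rw [fderiv_clm_apply ((hv1.differentiable one_ne_zero) p) (differentiableAt_const e)]
    simp
  have hsymm : ∀ u w : Pt, fderiv ℝ (fderiv ℝ v) p u w = fderiv ℝ (fderiv ℝ v) p w u :=
    (hv.of_le (WithTop.coe_le_coe.mpr le_top) (m := 2)).contDiffAt.isSymmSndFDerivAt (by simp [minSmoothness_of_isRCLikeNormedField])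
  have T0 : HasFDerivAt (fun s : Pt => Real.exp (q (rad s - s.1)) *
      (fderiv ℝ v s (1, 0, 0) ^ 2 + fderiv ℝ v s (0, 1, 0) ^ 2 + fderiv ℝ v s (0, 0, 1) ^ 2)) _ p :=
    hE.mul ((((hasDerivAt_pow 2 _).comp_hasFDerivAt p (hw (1, 0, 0))).add
      ((hasDerivAt_pow 2 _).comp_hasFDerivAt p (hw (0, 1, 0)))).add
      ((hasDerivAt_pow 2 _).comp_hasFDerivAt p (hw (0, 0, 1))))
  have T1 : HasFDerivAt (fun s : Pt => Real.exp (q (rad s - s.1)) *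
      fderiv ℝ v s (1, 0, 0) * fderiv ℝ v s (0, 1, 0)) _ p :=
    (hE.mul (hw (1, 0, 0))).mul (hw (0, 1, 0))
  have T2 : HasFDerivAt (fun s : Pt => Real.exp (q (rad s - s.1)) *
      fderiv ℝ v s (1, 0, 0) * fderiv ℝ v s (0, 0, 1)) _ p :=
    (hE.mul (hw (1, 0, 0))).mul (hw (0, 0, 1))
  simp only [Box, bar1, bar2, dt_def, d1_def, d2_def]
  rw [T0.fderiv, T1.fderiv, T2.fderiv]
  simp only [ContinuousLinearMap.add_apply, ContinuousLinearMap.smul_apply,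
    ContinuousLinearMap.sub_apply, smul_eq_mul, pit_apply, pi1_apply, pi2_apply, key, Pi.mul_apply]
  rw [hsymm (0, 1, 0) (1, 0, 0), hsymm (0, 0, 1) (1, 0, 0)]
  set r := rad p
  set Q := Real.exp (q (rad p - p.1))
  set Q' := deriv q (rad p - p.1)
  set u := fderiv ℝ v p (1, 0, 0)
  set u1 := fderiv ℝ v p (0, 1, 0)
  set u2 := fderiv ℝ v p (0, 0, 1)
  set Btt := fderiv ℝ (fderiv ℝ v) p (1, 0, 0) (1, 0, 0)
  set Bt1 := fderiv ℝ (fderiv ℝ v) p (1, 0, 0) (0, 1, 0)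
  set Bt2 := fderiv ℝ (fderiv ℝ v) p (1, 0, 0) (0, 0, 1)
  set B11 := fderiv ℝ (fderiv ℝ v) p (0, 1, 0) (0, 1, 0)
  set B22 := fderiv ℝ (fderiv ℝ v) p (0, 0, 1) (0, 0, 1)
  field_simp
  ring_nf
  linear_combination (-2 * Q * u ^ 2 * Q') * hr2
end
end

section
/- (Fundamental identity along outgoing light rays in 2D) Let w be a smooth function on ℝ × ℝ² and fix a unit vector ω ∈ S¹. Then for r > 0 and t ≥ 0: ∂_+(r^{1/2} w)(t, rω) − ∂_+(r^{1/2} w)(0, (r+t)ω) = ∫_0^t [ (r+t−s)^{1/2} (□w) + (r+t−s)^{−3/2} (w/4 + Ω²w) ](s, (r+t−s)ω) ds, where ∂_+ = ∂_t + ∂_r, □ = ∂_t² − Δ, and Ω = x_1∂_2 − x_2∂_1. -/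
noncomputable section

def Om (f : Pt → ℝ) : Pt → ℝ := fun p => p.2.1 * d2 f p - p.2.2 * d1 f p
/-- The outgoing derivative `∂₊ = ∂_t + ∂_r`. -/
def dplus (f : Pt → ℝ) : Pt → ℝ :=
  fun p => dt f p + (p.2.1 / rad p) * d1 f p + (p.2.2 / rad p) * d2 f p

namespace S10

lemma contDiff_dapp {w : Pt → ℝ} (hw : ContDiff ℝ (⊤ : ℕ∞) w) (e : Pt) :
    ContDiff ℝ (⊤ : ℕ∞) (fun p => fderiv ℝ w p e) :=
  (hw.fderiv_right (by simp)).clm_apply contDiff_const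

lemma diff_fderiv {w : Pt → ℝ} (hw : ContDiff ℝ (⊤ : ℕ∞) w) (p : Pt) :
    DifferentiableAt ℝ (fderiv ℝ w) p :=
  ((hw.fderiv_right (m := (⊤ : ℕ∞)) (by simp)).differentiable (by simp)).differentiableAt

lemma fderiv_dapp {w : Pt → ℝ} (hw : ContDiff ℝ (⊤ : ℕ∞) w) (p e v : Pt) :
    fderiv ℝ (fun q => fderiv ℝ w q e) p v = fderiv ℝ (fderiv ℝ w) p v e := by
  have h := ((ContinuousLinearMap.apply ℝ ℝ e).hasFDerivAt.comp p
    (diff_fderiv hw p).hasFDerivAt).fderiv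
  have h2 : (fun q => fderiv ℝ w q e)
      = (ContinuousLinearMap.apply ℝ ℝ e) ∘ (fderiv ℝ w) := rfl
  rw [h2, h]
  simp

lemma sym2 {w : Pt → ℝ} (hw : ContDiff ℝ (⊤ : ℕ∞) w) (p a b : Pt) :
    fderiv ℝ (fderiv ℝ w) p a b = fderiv ℝ (fderiv ℝ w) p b a :=
  (hw.contDiffAt.isSymmSndFDerivAt (by rw [minSmoothness_of_isRCLikeNormedField]; exact WithTop.coe_le_coe.mpr (le_top : (2 : ℕ∞) ≤ ⊤))).eq a b


def Lx : Pt →L[ℝ] ℝ :=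
  (ContinuousLinearMap.fst ℝ ℝ ℝ).comp (ContinuousLinearMap.snd ℝ ℝ (ℝ × ℝ))
def Ly : Pt →L[ℝ] ℝ :=
  (ContinuousLinearMap.snd ℝ ℝ ℝ).comp (ContinuousLinearMap.snd ℝ ℝ (ℝ × ℝ))

@[simp] lemma Lx_apply (v : Pt) : Lx v = v.2.1 := rfl
@[simp] lemma Ly_apply (v : Pt) : Ly v = v.2.2 := rfl

lemma hasFDerivAt_norm2 (p : Pt) :
    HasFDerivAt (fun q : Pt => q.2.1 ^ 2 + q.2.2 ^ 2)
      ((2 * p.2.1) • Lx + (2 * p.2.2) • Ly) p := by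
  have hx : HasFDerivAt (fun q : Pt => q.2.1) Lx p := Lx.hasFDerivAt
  have hy : HasFDerivAt (fun q : Pt => q.2.2) Ly p := Ly.hasFDerivAt
  have h := (hx.mul hx).add (hy.mul hy)
  simp only [pow_two]
  refine h.congr_fderiv ?_
  ext <;> simp <;> ring

lemma hasFDerivAt_rad (p : Pt) (hp : 0 < p.2.1 ^ 2 + p.2.2 ^ 2) :
    HasFDerivAt rad ((1 / (2 * rad p)) • ((2 * p.2.1) • Lx + (2 * p.2.2) • Ly)) p := by
  have h1 := hasFDerivAt_norm2 p
  have h2 := Real.hasDerivAt_sqrt (x := p.2.1 ^ 2 + p.2.2 ^ 2) (ne_of_gt hp)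
  exact h2.comp_hasFDerivAt p h1

lemma rad_pos (p : Pt) (hp : 0 < p.2.1 ^ 2 + p.2.2 ^ 2) : 0 < rad p :=
  Real.sqrt_pos.2 hp

lemma hasFDerivAt_sqrtRad (p : Pt) (hp : 0 < p.2.1 ^ 2 + p.2.2 ^ 2) :
    HasFDerivAt (fun q => Real.sqrt (rad q))
      ((1 / (2 * Real.sqrt (rad p))) •
        ((1 / (2 * rad p)) • ((2 * p.2.1) • Lx + (2 * p.2.2) • Ly))) p := by
  have h2 := Real.hasDerivAt_sqrt (ne_of_gt (rad_pos p hp))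
  exact h2.comp_hasFDerivAt p (hasFDerivAt_rad p hp)

lemma dplus_eq {w : Pt → ℝ} (hw : ContDiff ℝ (⊤ : ℕ∞) w) (p : Pt)
    (hp : 0 < p.2.1 ^ 2 + p.2.2 ^ 2) :
    dplus (fun q => Real.sqrt (rad q) * w q) p =
      Real.sqrt (rad p) * dt w p +
        Real.sqrt (rad p) * (p.2.1 * d1 w p + p.2.2 * d2 w p) / rad p +
        w p / (2 * Real.sqrt (rad p)) := by
  have hsr := hasFDerivAt_sqrtRad p hp
  have hwp : HasFDerivAt w (fderiv ℝ w p) p :=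
    (hw.differentiable (by simp)).differentiableAt.hasFDerivAt
  have hF := hsr.mul hwp
  have hρ := rad_pos p hp
  have hsρ : 0 < Real.sqrt (rad p) := Real.sqrt_pos.2 hρ
  have hsq : Real.sqrt (rad p) ^ 2 = rad p := Real.sq_sqrt hρ.le
  have hrad2 : rad p ^ 2 = p.2.1 ^ 2 + p.2.2 ^ 2 := Real.sq_sqrt hp.le
  show dt _ p + (p.2.1 / rad p) * d1 _ p + (p.2.2 / rad p) * d2 _ p = _
  rw [show dt (fun q => Real.sqrt (rad q) * w q) p = _ from congrFun (congrArg _ rfl) _]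
  simp only [dt, d1, d2, (show HasFDerivAt (fun q => Real.sqrt (rad q) * w q) _ p from hF).fderiv]
  simp only [ContinuousLinearMap.add_apply, ContinuousLinearMap.coe_smul',
    Pi.smul_apply, Lx_apply, Ly_apply, smul_eq_mul]
  field_simp
  linear_combination (- w p) * hrad2

lemma Box_eq {w : Pt → ℝ} (hw : ContDiff ℝ (⊤ : ℕ∞) w) (p : Pt) :
    Box w p = fderiv ℝ (fderiv ℝ w) p (1,0,0) (1,0,0)
      - fderiv ℝ (fderiv ℝ w) p (0,1,0) (0,1,0)
      - fderiv ℝ (fderiv ℝ w) p (0,0,1) (0,0,1) := by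
  show fderiv ℝ (fun q => fderiv ℝ w q (1,0,0)) p (1,0,0)
      - fderiv ℝ (fun q => fderiv ℝ w q (0,1,0)) p (0,1,0)
      - fderiv ℝ (fun q => fderiv ℝ w q (0,0,1)) p (0,0,1) = _
  rw [fderiv_dapp hw, fderiv_dapp hw, fderiv_dapp hw]

lemma OmOm_eq {w : Pt → ℝ} (hw : ContDiff ℝ (⊤ : ℕ∞) w) (p : Pt) :
    Om (Om w) p =
      p.2.1 * (p.2.1 * fderiv ℝ (fderiv ℝ w) p (0,0,1) (0,0,1)
        - p.2.2 * fderiv ℝ (fderiv ℝ w) p (0,0,1) (0,1,0) - d1 w p)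
      - p.2.2 * (p.2.1 * fderiv ℝ (fderiv ℝ w) p (0,1,0) (0,0,1)
        - p.2.2 * fderiv ℝ (fderiv ℝ w) p (0,1,0) (0,1,0) + d2 w p) := by
  have hd1 : HasFDerivAt (d1 w) (fderiv ℝ (d1 w) p) p :=
    ((contDiff_dapp hw (0,1,0)).differentiable (by simp)).differentiableAt.hasFDerivAt
  have hd2 : HasFDerivAt (d2 w) (fderiv ℝ (d2 w) p) p :=
    ((contDiff_dapp hw (0,0,1)).differentiable (by simp)).differentiableAt.hasFDerivAt
  have hx : HasFDerivAt (fun q : Pt => q.2.1) Lx p := Lx.hasFDerivAt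
  have hy : HasFDerivAt (fun q : Pt => q.2.2) Ly p := Ly.hasFDerivAt
  have hOm : HasFDerivAt (Om w)
      ((p.2.1 • fderiv ℝ (d2 w) p + d2 w p • Lx)
        - (p.2.2 • fderiv ℝ (d1 w) p + d1 w p • Ly)) p := (hx.mul hd2).sub (hy.mul hd1)
  show p.2.1 * fderiv ℝ (Om w) p (0,0,1) - p.2.2 * fderiv ℝ (Om w) p (0,1,0) = _
  rw [hOm.fderiv]
  simp only [ContinuousLinearMap.sub_apply, ContinuousLinearMap.add_apply,
    ContinuousLinearMap.coe_smul', Pi.smul_apply, Lx_apply, Ly_apply, smul_eq_mul]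
  have e1 : fderiv ℝ (d2 w) p (0,0,1) = fderiv ℝ (fderiv ℝ w) p (0,0,1) (0,0,1) :=
    fderiv_dapp hw p (0,0,1) (0,0,1)
  have e2 : fderiv ℝ (d1 w) p (0,0,1) = fderiv ℝ (fderiv ℝ w) p (0,0,1) (0,1,0) :=
    fderiv_dapp hw p (0,1,0) (0,0,1)
  have e3 : fderiv ℝ (d2 w) p (0,1,0) = fderiv ℝ (fderiv ℝ w) p (0,1,0) (0,0,1) :=
    fderiv_dapp hw p (0,0,1) (0,1,0)
  have e4 : fderiv ℝ (d1 w) p (0,1,0) = fderiv ℝ (fderiv ℝ w) p (0,1,0) (0,1,0) :=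
    fderiv_dapp hw p (0,1,0) (0,1,0)
  rw [e1, e2, e3, e4]
  ring

lemma apply_vec (L : Pt →L[ℝ] ℝ) (a b : ℝ) :
    L (1, -a, -b) = L (1,0,0) - a * L (0,1,0) - b * L (0,0,1) := by
  have hv : ((1, -a, -b) : Pt) = (1,0,0) - a • ((0,1,0) : Pt) - b • ((0,0,1) : Pt) := by
    simp [Prod.ext_iff]
  rw [hv, map_sub, map_sub, map_smul, map_smul, smul_eq_mul, smul_eq_mul]

lemma rpow_neg_32 {ρ : ℝ} (hρ : 0 < ρ) : ρ ^ (-(3/2) : ℝ) = 1 / (ρ * Real.sqrt ρ) := by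
  rw [Real.rpow_neg hρ.le, show (3/2 : ℝ) = 1 + 1/2 by norm_num, Real.rpow_add hρ,
    Real.rpow_one, ← Real.sqrt_eq_rpow, one_div]

lemma rad_ray {ω1 ω2 : ℝ} (hω : ω1 ^ 2 + ω2 ^ 2 = 1) (a s : ℝ) (ha : 0 ≤ a) :
    rad (s, a * ω1, a * ω2) = a := by
  show Real.sqrt ((a * ω1) ^ 2 + (a * ω2) ^ 2) = a
  rw [show (a * ω1) ^ 2 + (a * ω2) ^ 2 = a ^ 2 by nlinarith [hω]]
  exact Real.sqrt_sq ha

lemma hasDerivAt_u {w : Pt → ℝ} (hw : ContDiff ℝ (⊤ : ℕ∞) w) {ω1 ω2 : ℝ}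
    (hω : ω1 ^ 2 + ω2 ^ 2 = 1) (c s : ℝ) (hs : 0 < c - s) :
    HasDerivAt (fun s => Real.sqrt (c - s) *
        (dt w (s, (c - s) * ω1, (c - s) * ω2) + ω1 * d1 w (s, (c - s) * ω1, (c - s) * ω2)
          + ω2 * d2 w (s, (c - s) * ω1, (c - s) * ω2))
        + w (s, (c - s) * ω1, (c - s) * ω2) / (2 * Real.sqrt (c - s)))
      (Real.sqrt (c - s) * Box w (s, (c - s) * ω1, (c - s) * ω2) +
        (c - s) ^ (-(3 / 2) : ℝ) *
          (w (s, (c - s) * ω1, (c - s) * ω2) / 4 +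
            Om (Om w) (s, (c - s) * ω1, (c - s) * ω2))) s := by
  have hsρ : 0 < Real.sqrt (c - s) := Real.sqrt_pos.2 hs
  have h2 : HasDerivAt (fun s : ℝ => (c - s) * ω1) (-ω1) s := by
    simpa using ((hasDerivAt_id s).const_sub c).mul_const ω1
  have h3 : HasDerivAt (fun s : ℝ => (c - s) * ω2) (-ω2) s := by
    simpa using ((hasDerivAt_id s).const_sub c).mul_const ω2
  have hγ : HasDerivAt (fun s : ℝ => ((s, (c - s) * ω1, (c - s) * ω2) : Pt))
      ((1, -ω1, -ω2) : Pt) s := (hasDerivAt_id s).prodMk (h2.prodMk h3)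
  set P : Pt := (s, (c - s) * ω1, (c - s) * ω2) with hP
  set v : Pt := (1, -ω1, -ω2) with hv
  have hdT : HasFDerivAt (dt w) (fderiv ℝ (dt w) P) P :=
    ((contDiff_dapp hw (1,0,0)).differentiable (by simp)).differentiableAt.hasFDerivAt
  have hdX : HasFDerivAt (d1 w) (fderiv ℝ (d1 w) P) P :=
    ((contDiff_dapp hw (0,1,0)).differentiable (by simp)).differentiableAt.hasFDerivAt
  have hdY : HasFDerivAt (d2 w) (fderiv ℝ (d2 w) P) P :=
    ((contDiff_dapp hw (0,0,1)).differentiable (by simp)).differentiableAt.hasFDerivAt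
  have hdW : HasFDerivAt w (fderiv ℝ w P) P :=
    (hw.differentiable (by simp)).differentiableAt.hasFDerivAt
  have hT : HasDerivAt (fun s : ℝ => dt w (s, (c - s) * ω1, (c - s) * ω2))
      (fderiv ℝ (dt w) P v) s := by have := hdT.comp_hasDerivAt s hγ; exact this
  have hX : HasDerivAt (fun s : ℝ => d1 w (s, (c - s) * ω1, (c - s) * ω2))
      (fderiv ℝ (d1 w) P v) s := by have := hdX.comp_hasDerivAt s hγ; exact this
  have hY : HasDerivAt (fun s : ℝ => d2 w (s, (c - s) * ω1, (c - s) * ω2))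
      (fderiv ℝ (d2 w) P v) s := by have := hdY.comp_hasDerivAt s hγ; exact this
  have hW : HasDerivAt (fun s : ℝ => w (s, (c - s) * ω1, (c - s) * ω2))
      (fderiv ℝ w P v) s := hdW.comp_hasDerivAt s hγ
  have hsqrt : HasDerivAt (fun s : ℝ => Real.sqrt (c - s))
      (-(1 / (2 * Real.sqrt (c - s)))) s := by
    have hc : HasDerivAt (fun s : ℝ => c - s) (-1) s := by
      simpa using (hasDerivAt_id s).const_sub c
    exact ((Real.hasDerivAt_sqrt (ne_of_gt hs)).comp s hc).congr_deriv (by ring)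
  have hsum := (hT.add (hX.const_mul ω1)).add (hY.const_mul ω2)
  have hA := hsqrt.mul hsum
  have hden : (2 : ℝ) * Real.sqrt (c - s) ≠ 0 := by positivity
  have hB := hW.div (hsqrt.const_mul 2) hden
  have htot := hA.add hB
  refine htot.congr_deriv ?_
  symm
  rw [Box_eq hw, OmOm_eq hw, rpow_neg_32 hs]
  have eT : fderiv ℝ (dt w) P v =
      fderiv ℝ (fderiv ℝ w) P (1,0,0) (1,0,0) - ω1 * fderiv ℝ (fderiv ℝ w) P (1,0,0) (0,1,0)
        - ω2 * fderiv ℝ (fderiv ℝ w) P (1,0,0) (0,0,1) := by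
    have h1 : fderiv ℝ (dt w) P v = fderiv ℝ (fderiv ℝ w) P v (1,0,0) :=
      fderiv_dapp hw P (1,0,0) v
    rw [h1, sym2 hw P v (1,0,0), hv, apply_vec]
  have eX : fderiv ℝ (d1 w) P v =
      fderiv ℝ (fderiv ℝ w) P (1,0,0) (0,1,0) - ω1 * fderiv ℝ (fderiv ℝ w) P (0,1,0) (0,1,0)
        - ω2 * fderiv ℝ (fderiv ℝ w) P (0,1,0) (0,0,1) := by
    have h1 : fderiv ℝ (d1 w) P v = fderiv ℝ (fderiv ℝ w) P v (0,1,0) :=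
      fderiv_dapp hw P (0,1,0) v
    rw [h1, sym2 hw P v (0,1,0), hv, apply_vec, sym2 hw P (0,1,0) (1,0,0)]
  have eY : fderiv ℝ (d2 w) P v =
      fderiv ℝ (fderiv ℝ w) P (1,0,0) (0,0,1) - ω1 * fderiv ℝ (fderiv ℝ w) P (0,1,0) (0,0,1)
        - ω2 * fderiv ℝ (fderiv ℝ w) P (0,0,1) (0,0,1) := by
    have h1 : fderiv ℝ (d2 w) P v = fderiv ℝ (fderiv ℝ w) P v (0,0,1) :=
      fderiv_dapp hw P (0,0,1) v
    rw [h1, sym2 hw P v (0,0,1), hv, apply_vec, sym2 hw P (0,0,1) (1,0,0),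
      sym2 hw P (0,0,1) (0,1,0)]
  have eW : fderiv ℝ w P v = dt w P - ω1 * d1 w P - ω2 * d2 w P := by
    rw [hv, apply_vec]; rfl
  rw [eT, eX, eY, eW, ← hP, sym2 hw P (0,0,1) (0,1,0)]
  have hc1 : P.2.1 = (c - s) * ω1 := rfl
  have hc2 : P.2.2 = (c - s) * ω2 := rfl
  rw [hc1, hc2]
  have hne : Real.sqrt (c - s) ≠ 0 := ne_of_gt hsρ
  set ρ := c - s with hρd
  have hsq : Real.sqrt ρ ^ 2 = ρ := Real.sq_sqrt hs.le
  linear_combination (norm := skip) (Real.sqrt ρ * (fderiv ℝ (fderiv ℝ w) P (0,1,0) (0,1,0)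
    + fderiv ℝ (fderiv ℝ w) P (0,0,1) (0,0,1))) * hω
  simp only [Pi.add_apply, Pi.mul_apply, Pi.div_apply, ← hρd, ← hP]
  clear_value P ρ
  obtain ⟨q, hq0, rfl⟩ : ∃ q, 0 < q ∧ ρ = q ^ 2 := ⟨Real.sqrt ρ, hsρ, hsq.symm⟩
  rw [Real.sqrt_sq hq0.le]
  field_simp
  ring

lemma contDiff_Om {w : Pt → ℝ} (hw : ContDiff ℝ (⊤ : ℕ∞) w) : ContDiff ℝ (⊤ : ℕ∞) (Om w) :=
  (Lx.contDiff.mul (contDiff_dapp hw (0,0,1))).sub (Ly.contDiff.mul (contDiff_dapp hw (0,1,0)))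

lemma continuous_Box {w : Pt → ℝ} (hw : ContDiff ℝ (⊤ : ℕ∞) w) : Continuous (Box w) := by
  have h1 : ContDiff ℝ (⊤ : ℕ∞) (dt (dt w)) := contDiff_dapp (contDiff_dapp hw (1,0,0)) (1,0,0)
  have h2 : ContDiff ℝ (⊤ : ℕ∞) (d1 (d1 w)) := contDiff_dapp (contDiff_dapp hw (0,1,0)) (0,1,0)
  have h3 : ContDiff ℝ (⊤ : ℕ∞) (d2 (d2 w)) := contDiff_dapp (contDiff_dapp hw (0,0,1)) (0,0,1)
  exact ((h1.continuous.sub h2.continuous).sub h3.continuous)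

end S10

open S10

/-- fundamental identity along outgoing light rays in 2D. -/
theorem stmt10 (w : Pt → ℝ) (hw : ContDiff ℝ (⊤ : ℕ∞) w)
    (ω1 ω2 : ℝ) (hω : ω1 ^ 2 + ω2 ^ 2 = 1) (r t : ℝ) (hr : 0 < r) (ht : 0 ≤ t) :
    dplus (fun p => Real.sqrt (rad p) * w p) (t, r * ω1, r * ω2) -
      dplus (fun p => Real.sqrt (rad p) * w p) (0, (r + t) * ω1, (r + t) * ω2) =
    ∫ s in (0:ℝ)..t,
      (Real.sqrt (r + t - s) * Box w (s, (r + t - s) * ω1, (r + t - s) * ω2) +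
        (r + t - s) ^ (-(3 / 2) : ℝ) *
          (w (s, (r + t - s) * ω1, (r + t - s) * ω2) / 4 +
            Om (Om w) (s, (r + t - s) * ω1, (r + t - s) * ω2))) := by
  set c := r + t with hc
  set u : ℝ → ℝ := fun s => Real.sqrt (c - s) *
      (dt w (s, (c - s) * ω1, (c - s) * ω2) + ω1 * d1 w (s, (c - s) * ω1, (c - s) * ω2)
        + ω2 * d2 w (s, (c - s) * ω1, (c - s) * ω2))
      + w (s, (c - s) * ω1, (c - s) * ω2) / (2 * Real.sqrt (c - s)) with hu
  have huIcc : Set.uIcc (0:ℝ) t = Set.Icc 0 t := Set.uIcc_of_le ht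
  have hderiv : ∀ s ∈ Set.uIcc (0:ℝ) t,
      HasDerivAt u (Real.sqrt (c - s) * Box w (s, (c - s) * ω1, (c - s) * ω2) +
        (c - s) ^ (-(3 / 2) : ℝ) *
          (w (s, (c - s) * ω1, (c - s) * ω2) / 4 +
            Om (Om w) (s, (c - s) * ω1, (c - s) * ω2))) s := by
    intro s hsm
    rw [huIcc] at hsm
    have hs : 0 < c - s := by
      have := hsm.2; simp only [hc]; linarith
    exact hasDerivAt_u hw hω c s hs
  have hγc : Continuous (fun s : ℝ => ((s, (c - s) * ω1, (c - s) * ω2) : Pt)) := by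
    fun_prop
  have hint : IntervalIntegrable (fun s => Real.sqrt (c - s) * Box w (s, (c - s) * ω1, (c - s) * ω2) +
        (c - s) ^ (-(3 / 2) : ℝ) *
          (w (s, (c - s) * ω1, (c - s) * ω2) / 4 +
            Om (Om w) (s, (c - s) * ω1, (c - s) * ω2)))
      MeasureTheory.volume 0 t := by
    apply ContinuousOn.intervalIntegrable
    apply ContinuousOn.add
    · exact ((Real.continuous_sqrt.comp (by fun_prop)).mul
        ((continuous_Box hw).comp hγc)).continuousOn
    · apply ContinuousOn.mul
      · apply continuousOn_of_forall_continuousAt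
        intro s hsm
        rw [huIcc] at hsm
        have hs : c - s ≠ 0 := by
          have h2 := hsm.2; simp only [hc]; intro h; linarith
        exact (Real.continuousAt_rpow_const (c - s) _ (Or.inl hs)).comp
          ((continuous_const.sub continuous_id).continuousAt)
      · exact (((hw.continuous.comp hγc).div_const 4).add
          ((contDiff_Om (contDiff_Om hw)).continuous.comp hγc)).continuousOn
  have hFTC := intervalIntegral.integral_eq_sub_of_hasDerivAt hderiv hint
  rw [hFTC]
  have hr2 : ∀ a : ℝ, 0 < a → 0 < (a * ω1) ^ 2 + (a * ω2) ^ 2 := by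
    intro a ha
    have h : (a * ω1) ^ 2 + (a * ω2) ^ 2 = a ^ 2 := by linear_combination a ^ 2 * hω
    rw [h]; positivity
  have e1 : dplus (fun p => Real.sqrt (rad p) * w p) (t, r * ω1, r * ω2) = u t := by
    rw [dplus_eq hw _ (hr2 r hr)]
    have hrad : rad (t, r * ω1, r * ω2) = r := rad_ray hω r t hr.le
    simp only [hu]
    have hct : c - t = r := by rw [hc]; ring
    rw [hct, hrad]
    have h1 : r ≠ 0 := ne_of_gt hr
    have h2 : Real.sqrt r ≠ 0 := ne_of_gt (Real.sqrt_pos.2 hr)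
    field_simp
    ring
  have e2 : dplus (fun p => Real.sqrt (rad p) * w p) (0, c * ω1, c * ω2) = u 0 := by
    have hcpos : 0 < c := by rw [hc]; linarith
    rw [dplus_eq hw _ (hr2 c hcpos)]
    have hrad : rad (0, c * ω1, c * ω2) = c := rad_ray hω c 0 hcpos.le
    simp only [hu]
    have hct : c - 0 = c := by ring
    rw [hct, hrad]
    have h1 : c ≠ 0 := ne_of_gt hcpos
    have h2 : Real.sqrt c ≠ 0 := ne_of_gt (Real.sqrt_pos.2 hcpos)
    field_simp
    ring
  rw [e1, e2]
end
end
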